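/- Let p ≥ 8 be an integer, h = ⌊p/2⌋, and let C ≥ 1 be a natural number. Then the element g = a^{(h−2)·Σ_{l=0}^{C−1} p^l} of BS(1,p) has word length l(g) = h·C − 2; in particular, the word (a^{h−2} t)^{C−1} a^{h−2} t^{−(C−1)} is a geodesic representative of g. -/
import Mathlib


/-- The single relator `t a t⁻¹ a^{-p}` of the Baumslag–Solitar group `BS(1,p)`,
where `a` is the image of `0 : Fin 2` and `t` is the image of `1 : Fin 2`. -/
def BSRel (p : ℤ) : Set (FreeGroup (Fin 2)) :=
  {FreeGroup.of 1 * FreeGroup.of 0 * (FreeGroup.of 1)⁻¹ * (FreeGroup.of 0) ^ (-p)}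

/-- The Baumslag–Solitar group `BS(1,p) = ⟨a, t ∣ t a t⁻¹ = a^p⟩`. -/
abbrev BS (p : ℤ) : Type := PresentedGroup (BSRel p)

/-- The generator `a` of `BS(1,p)`. -/
def BSa (p : ℤ) : BS p := PresentedGroup.of 0

/-- The generator `t` of `BS(1,p)`. -/
def BSt (p : ℤ) : BS p := PresentedGroup.of 1

/-- The word length of `g ∈ BS(1,p)` with respect to the generating set
`{a, a⁻¹, t, t⁻¹}`: the least `n` such that `g` is a product of `n` generators. -/
noncomputable def BSlength (p : ℤ) (g : BS p) : ℕ :=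
  sInf {n : ℕ | ∃ w : List (BS p), w.length = n ∧
    (∀ x ∈ w, x = BSa p ∨ x = (BSa p)⁻¹ ∨ x = BSt p ∨ x = (BSt p)⁻¹) ∧ w.prod = g}


/-- scale factor -/
def BSee (p : ℤ) : ℚ := if p = 0 then 1 else (p : ℚ)

lemma BSee_ne_zero (p : ℤ) : BSee p ≠ 0 := by
  unfold BSee; split
  · norm_num
  · exact_mod_cast ‹p ≠ 0›

/-- The affine group ℤ ⋉ ℚ, (k,q) ↦ (x ↦ p^k x + q). -/
@[ext] structure BSAff (p : ℤ) where
  k : ℤ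
  q : ℚ

instance (p : ℤ) : Group (BSAff p) where
  mul g h := ⟨g.k + h.k, g.q + BSee p ^ g.k * h.q⟩
  one := ⟨0, 0⟩
  inv g := ⟨-g.k, -(BSee p ^ (-g.k) * g.q)⟩
  mul_assoc a b c := by
    ext
    · show a.k + b.k + c.k = a.k + (b.k + c.k); ring
    · show (a.q + BSee p ^ a.k * b.q) + BSee p ^ (a.k + b.k) * c.q
        = a.q + BSee p ^ a.k * (b.q + BSee p ^ b.k * c.q)
      rw [zpow_add₀ (BSee_ne_zero p)]; ring
  one_mul a := by
    ext
    · show (0 : ℤ) + a.k = a.k; ring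
    · show 0 + BSee p ^ (0:ℤ) * a.q = a.q; simp
  mul_one a := by
    ext
    · show a.k + 0 = a.k; ring
    · show a.q + BSee p ^ a.k * 0 = a.q; ring
  inv_mul_cancel a := by
    ext
    · show -a.k + a.k = 0; ring
    · show -(BSee p ^ (-a.k) * a.q) + BSee p ^ (-a.k) * a.q = 0; ring

lemma BSAff.mul_def {p : ℤ} (a b : BSAff p) :
    a * b = ⟨a.k + b.k, a.q + BSee p ^ a.k * b.q⟩ := rfl

lemma BSAff.one_def {p : ℤ} : (1 : BSAff p) = ⟨0, 0⟩ := rfl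

lemma BSAff.inv_def {p : ℤ} (a : BSAff p) :
    a⁻¹ = ⟨-a.k, -(BSee p ^ (-a.k) * a.q)⟩ := rfl

lemma BSAff.transl_pow {p : ℤ} (q : ℚ) (n : ℕ) :
    (⟨0, q⟩ : BSAff p) ^ n = ⟨0, n * q⟩ := by
  induction n with
  | zero => simp [BSAff.one_def]
  | succ n ih => rw [pow_succ, ih, BSAff.mul_def]; simp; ring

lemma BSAff.transl_zpow {p : ℤ} (q : ℚ) (n : ℤ) :
    (⟨0, q⟩ : BSAff p) ^ n = ⟨0, n * q⟩ := by
  cases n with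
  | ofNat n => simpa using BSAff.transl_pow q n
  | negSucc n =>
      rw [zpow_negSucc, BSAff.transl_pow, BSAff.inv_def]
      simp
      push_cast
      ring

/-- the images of the generators -/
def BSf (p : ℤ) : Fin 2 → BSAff p := fun i => if i = 0 then ⟨0, 1⟩ else ⟨1, 0⟩

lemma BSf_rel (p : ℤ) (hp : p ≠ 0) : ∀ r ∈ BSRel p, FreeGroup.lift (BSf p) r = 1 := by
  intro r hr
  rcases hr with rfl
  have h0 : FreeGroup.lift (BSf p) (FreeGroup.of (0 : Fin 2)) = ⟨0, 1⟩ := by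
    simp [BSf]
  have h1 : FreeGroup.lift (BSf p) (FreeGroup.of (1 : Fin 2)) = ⟨1, 0⟩ := by
    simp [BSf]
  have he : BSee p = (p : ℚ) := by unfold BSee; simp [hp]
  rw [map_mul, map_mul, map_mul, map_inv, map_zpow, h0, h1]
  rw [BSAff.transl_zpow]
  rw [BSAff.inv_def, BSAff.mul_def, BSAff.mul_def, BSAff.mul_def, BSAff.one_def]
  simp [he]

/-- the representation of BS(1,p) in the affine group -/
noncomputable def BSrep (p : ℤ) (hp : p ≠ 0) : BS p →* BSAff p :=
  PresentedGroup.toGroup (BSf_rel p hp)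

lemma BSrep_a (p : ℤ) (hp : p ≠ 0) : BSrep p hp (BSa p) = ⟨0, 1⟩ := by
  rw [BSa, BSrep, PresentedGroup.toGroup.of]; simp [BSf]

lemma BSrep_t (p : ℤ) (hp : p ≠ 0) : BSrep p hp (BSt p) = ⟨1, 0⟩ := by
  rw [BSt, BSrep, PresentedGroup.toGroup.of]; simp [BSf]

lemma BSrep_a_zpow (p : ℤ) (hp : p ≠ 0) (m : ℤ) :
    BSrep p hp ((BSa p) ^ m) = ⟨0, m⟩ := by
  rw [map_zpow, BSrep_a, BSAff.transl_zpow, mul_one]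

lemma BS_rel (p : ℤ) : BSt p * BSa p * (BSt p)⁻¹ = (BSa p) ^ p := by
  have h : (PresentedGroup.mk (BSRel p))
      (FreeGroup.of 1 * FreeGroup.of 0 * (FreeGroup.of 1)⁻¹ * (FreeGroup.of 0) ^ (-p)) = 1 := by
    apply (QuotientGroup.eq_one_iff _).mpr
    exact Subgroup.subset_normalClosure rfl
  rw [map_mul, map_mul, map_mul, map_inv, map_zpow] at h
  have ha : (PresentedGroup.mk (BSRel p)) (FreeGroup.of 0) = BSa p := rfl
  have ht : (PresentedGroup.mk (BSRel p)) (FreeGroup.of 1) = BSt p := rfl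
  rw [ha, ht] at h
  have := mul_eq_one_iff_eq_inv.mp h
  rw [this, zpow_neg, inv_inv]

lemma BS_conj_zpow (p : ℤ) (m : ℤ) :
    BSt p * (BSa p) ^ m * (BSt p)⁻¹ = (BSa p) ^ (p * m) := by
  rw [zpow_mul, ← BS_rel p]
  exact (conj_zpow ..).symm

/-- the geodesic word identity -/
lemma BS_word_eq (p : ℤ) (e : ℤ) : ∀ n : ℕ,
    ((BSa p) ^ e * BSt p) ^ n * (BSa p) ^ e * (BSt p) ^ (-(n:ℤ))
      = (BSa p) ^ (e * ∑ l ∈ Finset.range (n+1), p ^ l) := by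
  intro n
  induction n with
  | zero => simp
  | succ n ih =>
      push_cast
      have : ((BSa p) ^ e * BSt p) ^ (n+1) * (BSa p) ^ e * (BSt p) ^ (-((n:ℤ)+1))
          = (BSa p) ^ e * (BSt p *
            (((BSa p) ^ e * BSt p) ^ n * (BSa p) ^ e * (BSt p) ^ (-(n:ℤ))) * (BSt p)⁻¹) := by
        rw [pow_succ']
        have : (BSt p) ^ (-((n:ℤ)+1)) = (BSt p) ^ (-(n:ℤ)) * (BSt p)⁻¹ := by
          rw [← zpow_neg_one, ← zpow_add]; ring_nf
        rw [this]
        group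
      rw [this, ih, BS_conj_zpow, ← zpow_add]
      congr 1
      rw [Finset.sum_range_succ' (fun l => p ^ l) (n+1)]
      rw [mul_add, Finset.mul_sum]
      simp only [pow_zero, mul_one, pow_succ]
      rw [add_comm]
      congr 1
      rw [Finset.mul_sum, Finset.mul_sum]
      exact Finset.sum_congr rfl fun x _ => by ring

lemma BS_key (p : ℤ) (hp : 8 ≤ p) (w : List (BSAff p))
    (hw : ∀ x ∈ w, x = (⟨0,1⟩ : BSAff p) ∨ x = (⟨0,1⟩ : BSAff p)⁻¹ ∨
        x = (⟨1,0⟩ : BSAff p) ∨ x = (⟨1,0⟩ : BSAff p)⁻¹) :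
    ∃ (s lo hi : ℤ) (c : ℤ → ℤ),
      lo ≤ 0 ∧ 0 ≤ hi ∧ lo ≤ s ∧ s ≤ hi ∧
      (∀ j, j ∉ Finset.Icc lo hi → c j = 0) ∧
      w.prod = ⟨s, ∑ j ∈ Finset.Icc lo hi, (c j : ℚ) * (p:ℚ) ^ j⟩ ∧
      (∑ j ∈ Finset.Icc lo hi, ((c j).natAbs : ℤ)) + (2*(hi - lo) - ((s.natAbs : ℤ)))
        ≤ w.length := by
  have hp0 : p ≠ 0 := by omega
  have he : BSee p = (p : ℚ) := by unfold BSee; simp [hp0]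
  have hpQ : (p : ℚ) ≠ 0 := by exact_mod_cast hp0
  induction w using List.reverseRecOn with
  | nil =>
      refine ⟨0, 0, 0, fun _ => 0, le_refl _, le_refl _, le_refl _, le_refl _, ?_, ?_, ?_⟩
      · intro j _; rfl
      · simp [BSAff.one_def]
      · simp
  | append_singleton w x ih =>
      obtain ⟨s, lo, hi, c, hlo, hhi, hls, hsh, hsupp, hprod, hlen⟩ :=
        ih (fun y hy => hw y (by simp [hy]))
      have hx := hw x (by simp)
      rw [List.prod_append, List.prod_singleton, hprod]
      -- `a^{±1}` case handler
      have hacase : ∀ ε : ℤ, ε.natAbs = 1 → x = ⟨0, (ε : ℚ)⟩ →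
          ∃ (s' lo' hi' : ℤ) (c' : ℤ → ℤ),
            lo' ≤ 0 ∧ 0 ≤ hi' ∧ lo' ≤ s' ∧ s' ≤ hi' ∧
            (∀ j, j ∉ Finset.Icc lo' hi' → c' j = 0) ∧
            (⟨s, ∑ j ∈ Finset.Icc lo hi, (c j : ℚ) * (p:ℚ) ^ j⟩ : BSAff p) * x =
              ⟨s', ∑ j ∈ Finset.Icc lo' hi', (c' j : ℚ) * (p:ℚ) ^ j⟩ ∧
            (∑ j ∈ Finset.Icc lo' hi', ((c' j).natAbs : ℤ)) + (2*(hi' - lo') - ((s'.natAbs : ℤ)))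
              ≤ (w ++ [x]).length := by
        intro ε hε hxe
        have hmem : s ∈ Finset.Icc lo hi := Finset.mem_Icc.mpr ⟨hls, hsh⟩
        have key1 : ∑ j ∈ Finset.Icc lo hi,
              ((Function.update c s (c s + ε) j : ℤ) : ℚ) * (p:ℚ) ^ j
            = (∑ j ∈ Finset.Icc lo hi, (c j : ℚ) * (p:ℚ) ^ j) + (p:ℚ) ^ s * ε := by
          have hcongr : (∑ j ∈ (Finset.Icc lo hi).erase s,
              ((Function.update c s (c s + ε) j : ℤ) : ℚ) * (p:ℚ) ^ j)
              = ∑ j ∈ (Finset.Icc lo hi).erase s, ((c j : ℚ)) * (p:ℚ) ^ j :=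
            Finset.sum_congr rfl (fun j hj => by
              rw [Function.update_of_ne (Finset.ne_of_mem_erase hj)])
          rw [← Finset.sum_erase_add _ _ hmem,
            ← Finset.sum_erase_add _ (fun j => ((c j : ℚ)) * (p:ℚ) ^ j) hmem,
            hcongr, Function.update_self]
          push_cast
          ring
        have key2 : ∑ j ∈ Finset.Icc lo hi,
              (((Function.update c s (c s + ε) j).natAbs : ℤ))
            = (∑ j ∈ (Finset.Icc lo hi).erase s, (((c j).natAbs : ℤ)))
              + (((c s + ε).natAbs : ℤ)) := by
          rw [← Finset.sum_erase_add _ _ hmem]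
          congr 1
          · exact Finset.sum_congr rfl (fun j hj => by
              rw [Function.update_of_ne (Finset.ne_of_mem_erase hj)])
          · rw [Function.update_self]
        have key3 : ∑ j ∈ Finset.Icc lo hi, (((c j).natAbs : ℤ))
            = (∑ j ∈ (Finset.Icc lo hi).erase s, (((c j).natAbs : ℤ)))
              + (((c s).natAbs : ℤ)) :=
          (Finset.sum_erase_add _ _ hmem).symm
        refine ⟨s, lo, hi, Function.update c s (c s + ε), hlo, hhi, hls, hsh, ?_, ?_, ?_⟩
        · intro j hj
          have : j ≠ s := by rintro rfl; exact hj hmem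
          rw [Function.update_of_ne this, hsupp j hj]
        · rw [hxe, BSAff.mul_def]
          ext
          · simp
          · show (∑ j ∈ Finset.Icc lo hi, (c j : ℚ) * (p:ℚ) ^ j) + BSee p ^ s * ε = _
            rw [he]
            exact (key1.trans (by ring)).symm
        · rw [key2]
          rw [key3] at hlen
          simp only [List.length_append, List.length_singleton]
          omega
      -- `t^{±1}` case handler
      have htcase : ∀ ε : ℤ, ε.natAbs = 1 → x = ⟨ε, 0⟩ →
          ∃ (s' lo' hi' : ℤ) (c' : ℤ → ℤ),
            lo' ≤ 0 ∧ 0 ≤ hi' ∧ lo' ≤ s' ∧ s' ≤ hi' ∧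
            (∀ j, j ∉ Finset.Icc lo' hi' → c' j = 0) ∧
            (⟨s, ∑ j ∈ Finset.Icc lo hi, (c j : ℚ) * (p:ℚ) ^ j⟩ : BSAff p) * x =
              ⟨s', ∑ j ∈ Finset.Icc lo' hi', (c' j : ℚ) * (p:ℚ) ^ j⟩ ∧
            (∑ j ∈ Finset.Icc lo' hi', ((c' j).natAbs : ℤ)) + (2*(hi' - lo') - ((s'.natAbs : ℤ)))
              ≤ (w ++ [x]).length := by
        intro ε hε hxe
        have hsub : Finset.Icc lo hi ⊆ Finset.Icc (min lo (s+ε)) (max hi (s+ε)) := by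
          apply Finset.Icc_subset_Icc (min_le_left _ _) (le_max_left _ _)
        have hsum1 : ∑ j ∈ Finset.Icc (min lo (s+ε)) (max hi (s+ε)), (c j : ℚ) * (p:ℚ) ^ j
            = ∑ j ∈ Finset.Icc lo hi, (c j : ℚ) * (p:ℚ) ^ j := by
          refine (Finset.sum_subset hsub ?_).symm
          intro j _ hj; rw [hsupp j hj]; simp
        have hsum2 : ∑ j ∈ Finset.Icc (min lo (s+ε)) (max hi (s+ε)), (((c j).natAbs : ℤ))
            = ∑ j ∈ Finset.Icc lo hi, (((c j).natAbs : ℤ)) := by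
          refine (Finset.sum_subset hsub ?_).symm
          intro j _ hj; rw [hsupp j hj]; simp
        refine ⟨s + ε, min lo (s+ε), max hi (s+ε), c, ?_, ?_, ?_, ?_, ?_, ?_, ?_⟩
        · exact le_trans (min_le_left _ _) hlo
        · exact le_trans hhi (le_max_left _ _)
        · exact min_le_right _ _
        · exact le_max_right _ _
        · intro j hj
          apply hsupp
          intro hmem; exact hj (hsub hmem)
        · rw [hxe, BSAff.mul_def]
          ext
          · rfl
          · show (∑ j ∈ Finset.Icc lo hi, (c j : ℚ) * (p:ℚ) ^ j) + BSee p ^ s * 0 = _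
            rw [hsum1]; ring
        · rw [hsum2]
          simp only [List.length_append, List.length_singleton]
          have h1 : hi ≤ max hi (s+ε) := le_max_left _ _
          have h2 : s + ε ≤ max hi (s+ε) := le_max_right _ _
          have h4 : min lo (s+ε) ≤ lo := min_le_left _ _
          have h5 : min lo (s+ε) ≤ s + ε := min_le_right _ _
          rcases max_choice hi (s+ε) with h3 | h3 <;>
            rcases min_choice lo (s+ε) with h6 | h6 <;>
              rw [h3, h6] <;> omega
      rcases hx with hxa | hxa' | hxt | hxt'
      · exact hacase 1 rfl (by rw [hxa]; norm_num)
      · refine hacase (-1) (by norm_num) ?_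
        rw [hxa', BSAff.inv_def]
        ext <;> simp
      · exact htcase 1 rfl (by rw [hxt])
      · refine htcase (-1) (by norm_num) ?_
        rw [hxt', BSAff.inv_def]
        ext <;> simp

lemma BS_pow_lb (p : ℤ) (hp : 8 ≤ p) : ∀ n : ℕ, 7 * (n:ℤ) + 1 ≤ p ^ n := by
  intro n
  induction n with
  | zero => simp
  | succ n ih =>
      have hpn : (0:ℤ) < p ^ n := pow_pos (by omega) n
      have : p ^ (n+1) = p * p ^ n := by ring
      rw [this]
      push_cast
      nlinarith

lemma BS_base (p : ℤ) (hp : 8 ≤ p) (C k : ℕ) (hC : 1 ≤ C) :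
    (p/2) * C - 2 + 2*k ≤ (p/2 - 2) * (∑ l ∈ Finset.range C, p ^ l) * p ^ k := by
  set h := p / 2 with hh
  have hh4 : 4 ≤ h := by omega
  have hsum_ge : p ^ (C-1) ≤ ∑ l ∈ Finset.range C, p ^ l := by
    apply Finset.single_le_sum (f := fun l => p ^ l)
    · intro i _; positivity
    · simp; omega
  have hn : (C : ℤ) - 1 + k = ((C - 1 + k : ℕ) : ℤ) := by push_cast [hC]; omega
  set n : ℕ := C - 1 + k with hn'
  have hpow : 7 * (n:ℤ) + 1 ≤ p ^ n := BS_pow_lb p hp n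
  have hps : p ^ (C-1) * p ^ k = p ^ n := by rw [← pow_add]
  have h1 : (h - 2) * (p ^ n) ≤ (h - 2) * (∑ l ∈ Finset.range C, p ^ l) * p ^ k := by
    rw [← hps, ← mul_assoc]
    have hk0 : (0:ℤ) ≤ p ^ k := by positivity
    have := mul_le_mul_of_nonneg_left hsum_ge (by omega : (0:ℤ) ≤ h - 2)
    exact mul_le_mul_of_nonneg_right this hk0
  have h2 : h * C - 2 + 2*k ≤ (h - 2) * (7 * (n:ℤ) + 1) := by
    have hCn : (C:ℤ) = (n:ℤ) + 1 - k := by rw [hn']; push_cast [hC]; omega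
    have hk : (k:ℤ) ≤ n := by rw [hn']; push_cast; omega
    have hn0 : (0:ℤ) ≤ n := by positivity
    nlinarith [mul_nonneg hn0 (by omega : (0:ℤ) ≤ 6*h - 14),
      mul_nonneg (by positivity : (0:ℤ) ≤ (k:ℤ)) (by omega : (0:ℤ) ≤ h - 2)]
  have h3 : (h - 2) * (7 * (n:ℤ) + 1) ≤ (h - 2) * p ^ n :=
    mul_le_mul_of_nonneg_left hpow (by omega)
  linarith

lemma BS_digit_lb (p : ℤ) (hp : 8 ≤ p) :
    ∀ M : ℕ, ∀ C k : ℕ, 1 ≤ C → ∀ d : ℕ → ℤ,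
      (∀ i, M < i → d i = 0) →
      (∑ i ∈ Finset.range (M+1), d i * p ^ i)
        = (p/2 - 2) * (∑ l ∈ Finset.range C, p ^ l) * p ^ k →
      (p/2) * C - 2 + 2*(k:ℤ) ≤ (∑ i ∈ Finset.range (M+1), ((d i).natAbs : ℤ)) + 2*M := by
  intro M
  induction M with
  | zero =>
      intro C k hC d _ hsum
      rw [Finset.sum_range_one] at hsum ⊢
      rw [pow_zero, mul_one] at hsum
      have hbase := BS_base p hp C k hC
      rw [← hsum] at hbase
      have hh4 : 4 ≤ p / 2 := by omega
      have htgt : (0:ℤ) ≤ (p/2) * C - 2 + 2*k := by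
        have : (1:ℤ) ≤ (C:ℤ) := by exact_mod_cast hC
        nlinarith
      omega
  | succ M ih =>
      intro C k hC d hd0 hsum
      set h := p / 2 with hh
      have hh4 : 4 ≤ h := by omega
      have h2h : 2 * h ≤ p := by omega
      -- decompose the sum
      have hdec : ∑ i ∈ Finset.range (M+2), d i * p ^ i
          = d 0 + p * ∑ i ∈ Finset.range (M+1), d (i+1) * p ^ i := by
        rw [Finset.sum_range_succ' (fun i => d i * p ^ i) (M+1), Finset.mul_sum]
        simp only [pow_zero, mul_one, pow_succ]
        rw [add_comm]
        congr 1
        exact Finset.sum_congr rfl fun i _ => by ring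
      have habs_dec : ∑ i ∈ Finset.range (M+2), ((d i).natAbs : ℤ)
          = ((d 0).natAbs : ℤ) + ∑ i ∈ Finset.range (M+1), ((d (i+1)).natAbs : ℤ) := by
        rw [Finset.sum_range_succ' (fun i => ((d i).natAbs : ℤ)) (M+1)]
        ring
      set S : ℤ := ∑ i ∈ Finset.range (M+1), d (i+1) * p ^ i with hS
      -- helper to build new digit list and apply IH
      have main : ∀ N' : ℤ, ∀ C' k' : ℕ, 1 ≤ C' →
          N' = (p/2 - 2) * (∑ l ∈ Finset.range C', p ^ l) * p ^ k' →
          h * C' - 2 + 2*(k':ℤ) ≤ (∑ i ∈ Finset.range (M+1), ((d (i+1)).natAbs : ℤ))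
            + ((N' - S).natAbs : ℤ) + 2*M := by
        intro N' C' k' hC' hN'
        set E : ℤ := N' - S with hE
        set d' : ℕ → ℤ := fun i => if i = 0 then d 1 + E else d (i+1) with hd'
        have h0mem : (0:ℕ) ∈ Finset.range (M+1) := by simp
        have hsplit : ∀ f : ℕ → ℤ, ∑ i ∈ Finset.range (M+1), f i
            = (∑ i ∈ (Finset.range (M+1)).erase 0, f i) + f 0 :=
          fun f => (Finset.sum_erase_add _ f h0mem).symm
        have hagree : ∀ i ∈ (Finset.range (M+1)).erase 0, d' i * p ^ i = d (i+1) * p ^ i := by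
          intro i hi
          have : i ≠ 0 := Finset.ne_of_mem_erase hi
          simp [hd', this]
        have hagree2 : ∀ i ∈ (Finset.range (M+1)).erase 0,
            ((d' i).natAbs : ℤ) = ((d (i+1)).natAbs : ℤ) := by
          intro i hi
          have : i ≠ 0 := Finset.ne_of_mem_erase hi
          simp [hd', this]
        have hsum' : ∑ i ∈ Finset.range (M+1), d' i * p ^ i = S + E := by
          rw [hsplit (fun i => d' i * p ^ i), Finset.sum_congr rfl hagree, hS,
            hsplit (fun i => d (i+1) * p ^ i)]
          have hd'0 : d' 0 = d 1 + E := by simp [hd']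
          have hcol : d (0+1) = d 1 := rfl
          rw [hd'0, hcol]
          ring
        have habs' : ∑ i ∈ Finset.range (M+1), ((d' i).natAbs : ℤ)
            ≤ (∑ i ∈ Finset.range (M+1), ((d (i+1)).natAbs : ℤ)) + (E.natAbs : ℤ) := by
          rw [hsplit (fun i => ((d' i).natAbs : ℤ)), Finset.sum_congr rfl hagree2,
            hsplit (fun i => ((d (i+1)).natAbs : ℤ))]
          have hd'0 : d' 0 = d 1 + E := by simp [hd']
          have hcol : d (0+1) = d 1 := rfl
          rw [hcol]
          have : ((d' 0).natAbs : ℤ) ≤ ((d 1).natAbs : ℤ) + (E.natAbs : ℤ) := by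
            rw [hd'0]; omega
          omega
        have hvan : ∀ i, M < i → d' i = 0 := by
          intro i hi
          have : i ≠ 0 := by omega
          simp only [hd', if_neg this]
          exact hd0 (i+1) (by omega)
        have := ih C' k' hC' d' hvan (by rw [hsum', hE, ← hN']; ring)
        omega
      rw [habs_dec]
      rw [hdec] at hsum
      rcases Nat.eq_zero_or_pos k with hk0 | hkpos
      · subst hk0
        rcases Nat.lt_or_ge C 2 with hC1 | hC2
        · -- C = 1 : N = h - 2
          have hC1' : C = 1 := by omega
          subst hC1'
          simp only [Finset.sum_range_one, pow_zero, mul_one] at hsum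
          -- d 0 = (h-2) + p * (-S)
          have hd0eq : d 0 = (h - 2) + p * (-S) := by linear_combination hsum
          have hterm : (0:ℤ) ≤ ∑ i ∈ Finset.range (M+1), ((d (i+1)).natAbs : ℤ) :=
            Finset.sum_nonneg fun i _ => by positivity
          have hgoal : h - 2 ≤ ((d 0).natAbs : ℤ) + 2 := by
            rcases eq_or_ne S 0 with hS0 | hS0
            · rw [hS0] at hd0eq; simp at hd0eq; omega
            · have hSa : (1:ℤ) ≤ (S.natAbs : ℤ) := by
                have := Int.natAbs_pos.mpr hS0; omega
              have h1 : ((d 0).natAbs : ℤ) = |d 0| := by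
                rw [Int.abs_eq_natAbs]
              have h2 : (S.natAbs : ℤ) = |S| := by rw [Int.abs_eq_natAbs]
              have h3 : |p * S| ≤ |d 0| + |h - 2| := by
                have : p * S = (h - 2) - d 0 := by linear_combination hd0eq
                rw [this, abs_sub_comm]
                exact abs_sub _ _
              rw [abs_mul] at h3
              have h4 : |p| = p := abs_of_pos (by omega)
              have h5 : |h - 2| = h - 2 := abs_of_pos (by omega)
              rw [h4, h5] at h3
              have h6 : p ≤ p * |S| := by
                nlinarith [abs_nonneg S]
              omega
          simp only [Nat.cast_one, Nat.cast_zero, mul_one, mul_zero, add_zero]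
          omega
        · -- C ≥ 2
          obtain ⟨C', hC'⟩ : ∃ C', C = C' + 1 := ⟨C - 1, by omega⟩
          subst hC'
          have hC'1 : 1 ≤ C' := by omega
          have hsplitC : ∑ l ∈ Finset.range (C'+1), p ^ l
              = p * (∑ l ∈ Finset.range C', p ^ l) + 1 := by
            rw [Finset.sum_range_succ' (fun l => p ^ l) C', Finset.mul_sum]
            simp only [pow_zero, pow_succ]
            congr 1
            exact Finset.sum_congr rfl fun l _ => by ring
          set Sig : ℤ := ∑ l ∈ Finset.range C', p ^ l with hSig
          set N' : ℤ := (h - 2) * Sig with hN'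
          -- hsum : d 0 + p * S = (h-2) * (p * Sig + 1) * 1
          rw [hsplitC] at hsum
          simp only [pow_zero, mul_one] at hsum
          have hE : d 0 = (h - 2) + p * (N' - S) := by
            rw [hN']; linear_combination hsum
          have hmain := main N' C' 0 hC'1 (by rw [hN', hSig, hh]; simp)
          set E : ℤ := N' - S with hEE
          -- key: |d 0| + 2 ≥ |E| + h
          have hkey : (E.natAbs : ℤ) + h ≤ ((d 0).natAbs : ℤ) + 2 := by
            rcases eq_or_ne E 0 with hE0 | hE0
            · rw [hE0] at hE; simp at hE
              rw [hE0]
              have hd0n : ((d 0).natAbs : ℤ) = h - 2 := by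
                rw [hE, Int.natAbs_of_nonneg (by omega)]
              omega
            · have hEa : (1:ℤ) ≤ (E.natAbs : ℤ) := by
                have := Int.natAbs_pos.mpr hE0; omega
              have h1 : ((d 0).natAbs : ℤ) = |d 0| := by rw [Int.abs_eq_natAbs]
              have h2 : (E.natAbs : ℤ) = |E| := by rw [Int.abs_eq_natAbs]
              have h3 : |p * E| ≤ |d 0| + |h - 2| := by
                have : p * E = d 0 - (h - 2) := by linear_combination -hE
                rw [this]
                exact abs_sub _ _
              rw [abs_mul, abs_of_pos (by omega : (0:ℤ) < p),
                abs_of_pos (by omega : (0:ℤ) < h - 2)] at h3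
              have h6 : p * |E| ≥ |E| + (p - 1) := by
                nlinarith [abs_nonneg E]
              omega
          have hcast : ((C'+1:ℕ):ℤ) = (C':ℤ) + 1 := by push_cast; ring
          rw [hcast]
          have hdist : h * ((C':ℤ) + 1) = h * (C':ℤ) + h := by ring
          omega
      · -- k ≥ 1
        obtain ⟨k', hk'⟩ : ∃ k', k = k' + 1 := ⟨k - 1, by omega⟩
        subst hk'
        set N' : ℤ := (h - 2) * (∑ l ∈ Finset.range C, p ^ l) * p ^ k' with hN'
        have hNpN' : d 0 + p * S = p * N' := by
          rw [hsum, hN', pow_succ]; ring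
        have hE : d 0 = p * (N' - S) := by linear_combination hNpN'
        have hmain := main N' C k' hC (by rw [hN', hh])
        set E : ℤ := N' - S with hEE
        have hkey : (E.natAbs : ℤ) ≤ ((d 0).natAbs : ℤ) := by
          have h1 : (d 0).natAbs = p.natAbs * E.natAbs := by rw [hE, Int.natAbs_mul]
          have h2 : E.natAbs ≤ p.natAbs * E.natAbs := Nat.le_mul_of_pos_left _ (by omega)
          omega
        omega

lemma BS_reindex {β : Type*} [AddCommMonoid β] (lo hi : ℤ) (hle : lo ≤ hi) (f : ℤ → β) :
    ∑ j ∈ Finset.Icc lo hi, f j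
      = ∑ i ∈ Finset.range ((hi - lo).toNat + 1), f (lo + i) := by
  apply Finset.sum_bij' (fun (a : ℤ) _ => (a - lo).toNat) (fun (i : ℕ) _ => lo + i)
  · intro a ha
    rw [Finset.mem_Icc] at ha
    rw [Finset.mem_range]
    omega
  · intro i hi2
    rw [Finset.mem_range] at hi2
    rw [Finset.mem_Icc]
    omega
  · intro a ha
    rw [Finset.mem_Icc] at ha
    omega
  · intro i hi2
    rw [Finset.mem_range] at hi2
    omega
  · intro a ha
    rw [Finset.mem_Icc] at ha
    congr 1
    omega

lemma BS_flatten_prod {G : Type*} [Monoid G] (l : List G) :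
    ∀ n : ℕ, (List.replicate n l).flatten.prod = l.prod ^ n := by
  intro n
  induction n with
  | zero => simp
  | succ n ih => rw [List.replicate_succ, List.flatten_cons, List.prod_append, ih, pow_succ']
      
lemma BS_flatten_len {G : Type*} (l : List G) :
    ∀ n : ℕ, (List.replicate n l).flatten.length = n * l.length := by
  intro n
  induction n with
  | zero => simp
  | succ n ih => rw [List.replicate_succ, List.flatten_cons, List.length_append, ih]; ring

/-- For `p ≥ 8`, `h = ⌊p/2⌋`, and a natural number `C ≥ 1`, the element
`g = a^{(h-2)·Σ_{l=0}^{C-1} p^l}` of `BS(1,p)` has word length `h·C - 2`; in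
particular the word `(a^{h-2} t)^{C-1} a^{h-2} t^{-(C-1)}` (which represents `g`
and has exactly `h·C - 2` letters) is a geodesic representative of `g`. -/
theorem BS_power_of_a_length (p : ℤ) (hp : 8 ≤ p) (C : ℕ) (hC : 1 ≤ C) :
    (BSlength p ((BSa p) ^ ((p / 2 - 2) * ∑ l ∈ Finset.range C, p ^ l)) : ℤ)
        = (p / 2) * C - 2 ∧
      (BSa p) ^ ((p / 2 - 2) * ∑ l ∈ Finset.range C, p ^ l)
        = ((BSa p) ^ (p / 2 - 2) * BSt p) ^ (C - 1) * (BSa p) ^ (p / 2 - 2) *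
            (BSt p) ^ (-((C : ℤ) - 1)) := by
  have hp0 : p ≠ 0 := by omega
  have hpQ : (p : ℚ) ≠ 0 := by exact_mod_cast hp0
  obtain ⟨n, rfl⟩ : ∃ n, C = n + 1 := ⟨C - 1, by omega⟩
  have hh4 : 4 ≤ p / 2 := by omega
  have hword : (BSa p) ^ ((p / 2 - 2) * ∑ l ∈ Finset.range (n+1), p ^ l)
      = ((BSa p) ^ (p / 2 - 2) * BSt p) ^ n * (BSa p) ^ (p / 2 - 2) *
          (BSt p) ^ (-(n:ℤ)) := (BS_word_eq p (p/2-2) n).symm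
  have hC1 : (n + 1) - 1 = n := by omega
  have hC2 : (-((((n+1:ℕ)):ℤ) - 1)) = -(n:ℤ) := by push_cast; ring
  refine ⟨?_, by rw [hC1, hC2]; exact hword⟩
  set m : ℤ := (p / 2 - 2) * ∑ l ∈ Finset.range (n+1), p ^ l with hm
  set g : BS p := (BSa p) ^ m with hg
  set hn2 : ℕ := (p / 2 - 2).toNat with hhn2
  have hhn2' : (hn2 : ℤ) = p / 2 - 2 := Int.toNat_of_nonneg (by omega)
  set N0 : ℕ := hn2 * (n + 1) + 2 * n with hN0
  set S : Set ℕ := {q : ℕ | ∃ w : List (BS p), w.length = q ∧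
    (∀ x ∈ w, x = BSa p ∨ x = (BSa p)⁻¹ ∨ x = BSt p ∨ x = (BSt p)⁻¹) ∧ w.prod = g}
    with hSdef
  -- upper bound: the explicit word
  set w0 : List (BS p) :=
    (List.replicate n (List.replicate hn2 (BSa p) ++ [BSt p])).flatten
      ++ List.replicate hn2 (BSa p) ++ List.replicate n (BSt p)⁻¹ with hw0
  have hlen0 : w0.length = N0 := by
    rw [hw0]
    simp [BS_flatten_len, hN0]
    ring
  have hmem0 : ∀ x ∈ w0, x = BSa p ∨ x = (BSa p)⁻¹ ∨ x = BSt p ∨ x = (BSt p)⁻¹ := by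
    intro x hx
    rw [hw0] at hx
    simp only [List.mem_append, List.mem_flatten] at hx
    rcases hx with (⟨l, hl, hxl⟩ | hx) | hx
    · rw [List.eq_of_mem_replicate hl] at hxl
      rcases List.mem_append.mp hxl with hxa | hxt
      · left; exact List.eq_of_mem_replicate hxa
      · right; right; left; simpa using hxt
    · left; exact List.eq_of_mem_replicate hx
    · right; right; right; exact List.eq_of_mem_replicate hx
  have hz1 : (BSa p) ^ (p/2 - 2) = (BSa p) ^ hn2 := by rw [← hhn2', zpow_natCast]
  have hz2 : (BSt p) ^ (-(n:ℤ)) = ((BSt p)⁻¹) ^ n := by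
    rw [zpow_neg, ← inv_zpow, zpow_natCast]
  have hprod0 : w0.prod = g := by
    rw [hw0]
    simp only [List.prod_append, BS_flatten_prod, List.prod_replicate, List.prod_singleton]
    rw [hword, hz1, hz2]
  have hmemS : N0 ∈ S := ⟨w0, hlen0, hmem0, hprod0⟩
  -- lower bound
  have hlb : ∀ q ∈ S, N0 ≤ q := by
    intro q hq
    obtain ⟨w, hlen, hmem, hprod⟩ := hq
    have hw' : ∀ x ∈ w.map (BSrep p hp0), x = (⟨0,1⟩ : BSAff p) ∨
        x = (⟨0,1⟩ : BSAff p)⁻¹ ∨ x = (⟨1,0⟩ : BSAff p) ∨ x = (⟨1,0⟩ : BSAff p)⁻¹ := by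
      intro x hx
      rw [List.mem_map] at hx
      obtain ⟨y, hy, rfl⟩ := hx
      rcases hmem y hy with h|h|h|h
      · left; rw [h, BSrep_a]
      · right; left; rw [h, map_inv, BSrep_a]
      · right; right; left; rw [h, BSrep_t]
      · right; right; right; rw [h, map_inv, BSrep_t]
    obtain ⟨s, lo, hi, c, hlo, hhi, hls, hsh, hsupp, hprodA, hlenA⟩ :=
      BS_key p hp (w.map (BSrep p hp0)) hw'
    have hπ : (w.map (BSrep p hp0)).prod = ⟨0, (m : ℚ)⟩ := by
      rw [← map_list_prod, hprod, hg, BSrep_a_zpow]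
    rw [hπ] at hprodA
    injection hprodA with h1 h2
    subst h1
    set M : ℕ := (hi - lo).toNat with hM
    set k : ℕ := (-lo).toNat with hk
    have hMz : ((M : ℕ) : ℤ) = hi - lo := Int.toNat_of_nonneg (by omega)
    have hkz : ((k : ℕ) : ℤ) = -lo := Int.toNat_of_nonneg (by omega)
    set d : ℕ → ℤ := fun i => c (lo + i) with hd
    have hvan : ∀ i, M < i → d i = 0 := by
      intro i hi2
      have hnm : (lo + (i:ℤ)) ∉ Finset.Icc lo hi := by
        rw [Finset.mem_Icc]
        omega
      exact hsupp _ hnm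
    have hre := BS_reindex lo hi (by omega) (fun j => (c j : ℚ) * (p:ℚ) ^ j)
    rw [hre] at h2
    rw [← hM] at h2
    -- multiply by p^k
    have hQ : ((m * p ^ k : ℤ) : ℚ) = ∑ i ∈ Finset.range (M+1), ((d i * p ^ i : ℤ) : ℚ) := by
      have hterm : ∀ i ∈ Finset.range (M+1),
          ((c (lo + (i:ℤ)) : ℚ)) * (p:ℚ) ^ ((lo + (i:ℤ)) : ℤ) * (p:ℚ) ^ (k:ℕ)
            = ((d i : ℤ) : ℚ) * (p:ℚ) ^ (i:ℕ) := by
        intro i _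
        have hdi : d i = c (lo + i) := rfl
        rw [hdi]
        rw [← zpow_natCast (p:ℚ) i, ← zpow_natCast (p:ℚ) k, mul_assoc, ← zpow_add₀ hpQ]
        congr 2
        omega
      push_cast
      rw [h2, Finset.sum_mul]
      exact Finset.sum_congr rfl hterm
    have hZ : (∑ i ∈ Finset.range (M+1), d i * p ^ i) = (p / 2 - 2) *
        (∑ l ∈ Finset.range (n+1), p ^ l) * p ^ k := by
      have := hQ.symm
      rw [hm] at this
      exact_mod_cast this
    have hDL := BS_digit_lb p hp M (n+1) k (by omega) d hvan hZ
    -- reindex the natAbs sum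
    have hre2 := BS_reindex lo hi (by omega) (fun j => ((c j).natAbs : ℤ))
    rw [hre2] at hlenA
    rw [← hM] at hlenA
    have hlen' : (w.map (BSrep p hp0)).length = q := by rw [List.length_map, hlen]
    rw [hlen'] at hlenA
    have hdsum : (∑ i ∈ Finset.range (M+1), ((c (lo + (i:ℤ))).natAbs : ℤ))
        = ∑ i ∈ Finset.range (M+1), ((d i).natAbs : ℤ) :=
      Finset.sum_congr rfl (fun i _ => rfl)
    rw [hdsum] at hlenA
    -- conclude
    have hcast1 : ((n+1:ℕ):ℤ) = (n:ℤ) + 1 := by push_cast; ring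
    rw [hcast1] at hDL
    have hfin : (p/2) * ((n:ℤ) + 1) - 2 ≤ (q : ℤ) := by
      simp only [Int.natAbs_zero, Nat.cast_zero] at hlenA
      omega
    have hcastN0 : ((N0:ℕ):ℤ) = (p/2) * ((n:ℤ) + 1) - 2 := by
      rw [hN0]
      push_cast [hhn2']
      ring
    rw [← Int.ofNat_le, hcastN0]
    exact hfin
  have hSne : S.Nonempty := ⟨N0, hmemS⟩
  have hBS : BSlength p g = N0 :=
    le_antisymm (Nat.sInf_le hmemS) (hlb _ (Nat.sInf_mem hSne))
  rw [hBS]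
  have hcastN0 : ((N0:ℕ):ℤ) = (p/2) * ((n:ℤ) + 1) - 2 := by
    rw [hN0]
    push_cast [hhn2']
    ring
  rw [hcastN0]
  push_cast
  ring
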